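/- arXiv:1802.10193 — 4 statements merged into one kernel-verified Lean document; each statement's English description precedes it below -/
import Mathlib

section
/- If B1 and B2 are finite-dimensional central division algebras over a field E with coprime degrees, then B1 ⊗_E B2 is a division algebra. -/
open scoped TensorProduct

/-- Auxiliary lemma: for any element `x` of `B₁ ⊗[E] B₂` (with `B₁`, `B₂` division
algebras over `E`, `B₁` finite-dimensional), the `E`-dimension of the left ideal
generated by `x` is divisible by the `E`-dimension of `B₁`, because this left ideal
is a `B₁`-vector space via left multiplication by `B₁ ⊗ 1`. -/
theorem aux_dvd (E B₁ B₂ : Type) [Field E]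
    [DivisionRing B₁] [Algebra E B₁] [FiniteDimensional E B₁]
    [DivisionRing B₂] [Algebra E B₂]
    (x : B₁ ⊗[E] B₂) :
    Module.finrank E B₁ ∣
      Module.finrank E ((Submodule.span (B₁ ⊗[E] B₂) {x}).restrictScalars E) := by
  let A := B₁ ⊗[E] B₂
  let I : Submodule A A := Submodule.span A {x}
  let J : Submodule B₁ A := I.restrictScalars B₁
  have h1 : Module.finrank E B₁ ∣ Module.finrank E J :=
    ⟨Module.finrank B₁ J, (Module.finrank_mul_finrank E B₁ J).symm⟩
  have h2 : Module.finrank E (I.restrictScalars E) = Module.finrank E J := by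
    have h3 : J.restrictScalars E = I.restrictScalars E := rfl
    rw [← h3]
    exact ((Submodule.restrictScalarsEquiv E B₁ A J).restrictScalars E).finrank_eq
  exact h2 ▸ h1

/-- If `B₁` and `B₂` are finite-dimensional central division algebras over a field `E`
whose degrees (square roots of their dimensions) are coprime, then `B₁ ⊗[E] B₂` is a
division algebra (every nonzero element is invertible). -/
theorem tensor_of_coprime_degree_isDivision (E B₁ B₂ : Type) [Field E]
    [DivisionRing B₁] [Algebra E B₁] [Algebra.IsCentral E B₁] [FiniteDimensional E B₁]
    [DivisionRing B₂] [Algebra E B₂] [Algebra.IsCentral E B₂] [FiniteDimensional E B₂]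
    (d₁ d₂ : ℕ) (hd₁ : d₁ * d₁ = Module.finrank E B₁) (hd₂ : d₂ * d₂ = Module.finrank E B₂)
    (hcop : Nat.Coprime d₁ d₂) :
    ∀ x : B₁ ⊗[E] B₂, x ≠ 0 → IsUnit x := by
  have hdimA : Module.finrank E (B₁ ⊗[E] B₂) =
      Module.finrank E B₁ * Module.finrank E B₂ := Module.finrank_tensorProduct
  have hA1 : Module.finrank E B₁ ≠ 0 := Module.finrank_pos.ne'
  have hA2 : Module.finrank E B₂ ≠ 0 := Module.finrank_pos.ne'
  have hAnz : Module.finrank E (B₁ ⊗[E] B₂) ≠ 0 := by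
    rw [hdimA]; exact mul_ne_zero hA1 hA2
  haveI : Nontrivial (B₁ ⊗[E] B₂) :=
    Module.nontrivial_of_finrank_pos (Nat.pos_of_ne_zero hAnz)
  -- key step: every nonzero element has a left inverse
  have key : ∀ w : B₁ ⊗[E] B₂, w ≠ 0 → ∃ y : B₁ ⊗[E] B₂, y * w = 1 := by
    intro w hw
    set IE : Submodule E (B₁ ⊗[E] B₂) :=
      (Submodule.span (B₁ ⊗[E] B₂) {w}).restrictScalars E with hIE
    have hdvd1 : Module.finrank E B₁ ∣ Module.finrank E IE := aux_dvd E B₁ B₂ w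
    -- transfer to `B₂ ⊗ B₁` via the commutativity isomorphism to get divisibility by `dim B₂`
    have hdvd2 : Module.finrank E B₂ ∣ Module.finrank E IE := by
      let c : B₁ ⊗[E] B₂ ≃ₐ[E] B₂ ⊗[E] B₁ := Algebra.TensorProduct.comm E B₁ B₂
      have hmap : IE.map (c.toLinearEquiv : (B₁ ⊗[E] B₂) →ₗ[E] B₂ ⊗[E] B₁) =
          (Submodule.span (B₂ ⊗[E] B₁) {c w}).restrictScalars E := by
        ext y
        simp only [Submodule.mem_map, hIE, Submodule.restrictScalars_mem,
          Submodule.mem_span_singleton]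
        constructor
        · rintro ⟨z, ⟨a, rfl⟩, rfl⟩
          refine ⟨c a, ?_⟩
          show c a * c w = c (a * w)
          rw [map_mul]
        · rintro ⟨a, ha⟩
          refine ⟨c.symm a * w, ⟨c.symm a, rfl⟩, ?_⟩
          show c (c.symm a * w) = y
          rw [map_mul, AlgEquiv.apply_symm_apply]
          exact ha
      have heq : Module.finrank E
          ((Submodule.span (B₂ ⊗[E] B₁) {c w}).restrictScalars E) =
          Module.finrank E IE := by
        rw [← hmap]
        exact LinearEquiv.finrank_map_eq c.toLinearEquiv IE
      exact heq ▸ aux_dvd E B₂ B₁ (c w)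
    have hcop2 : Nat.Coprime (Module.finrank E B₁) (Module.finrank E B₂) := by
      rw [← hd₁, ← hd₂]
      exact Nat.Coprime.mul (hcop.mul_right hcop) (hcop.mul_right hcop)
    have hdvd : Module.finrank E (B₁ ⊗[E] B₂) ∣ Module.finrank E IE := by
      rw [hdimA]
      exact hcop2.mul_dvd_of_dvd_of_dvd hdvd1 hdvd2
    have hge : Module.finrank E (B₁ ⊗[E] B₂) ≤ Module.finrank E IE := by
      refine Nat.le_of_dvd ?_ hdvd
      have hxI : w ∈ IE := Submodule.mem_span_singleton_self w
      have hne : IE ≠ ⊥ := by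
        intro h
        rw [h, Submodule.mem_bot] at hxI
        exact hw hxI
      haveI : Nontrivial IE := Submodule.nontrivial_iff_ne_bot.mpr hne
      exact Module.finrank_pos
    have htop : IE = ⊤ :=
      Submodule.eq_top_of_finrank_eq (le_antisymm (Submodule.finrank_le IE) hge)
    have h1I : (1 : B₁ ⊗[E] B₂) ∈ Submodule.span (B₁ ⊗[E] B₂) {w} := by
      have : (1 : B₁ ⊗[E] B₂) ∈ IE := htop ▸ Submodule.mem_top
      exact this
    obtain ⟨y, hy⟩ := Submodule.mem_span_singleton.mp h1I
    exact ⟨y, hy⟩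
  intro x hx
  obtain ⟨y, hy⟩ := key x hx
  have hynz : y ≠ 0 := by
    intro h; rw [h, zero_mul] at hy; exact zero_ne_one hy
  obtain ⟨z, hz⟩ := key y hynz
  have hzx : z = x := by
    calc z = z * (y * x) := by rw [hy, mul_one]
    _ = (z * y) * x := by rw [mul_assoc]
    _ = x := by rw [hz, one_mul]
  exact ⟨⟨x, y, by rw [← hzx]; exact hz, hy⟩, rfl⟩
end

section
/- If B1 and B2 are finite-dimensional central simple algebras over a field E with coprime Schur indices, then ind(B1 ⊗_E B2) = ind(B1) · ind(B2). -/
/-! Writing `Bᵢ ≅ Mₙᵢ(Dᵢ)`, we get `B₁ ⊗ B₂ ≅ Mₙ₁ₙ₂(D₁ ⊗ D₂)`, so it suffices that `D₁ ⊗ D₂` is a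
division algebra. A left ideal of `D₁ ⊗ D₂` is a vector space over both `D₁` and `D₂`, so its
`E`-dimension is divisible by `d₁²` and by `d₂²`, hence by their product `dim_E (D₁ ⊗ D₂)`: a
nonzero left ideal is everything. -/

open scoped TensorProduct

/-- `d` is the Schur index of the central simple algebra `A` over `E`: the degree of the
division algebra Brauer-equivalent to `A`, i.e. `A ≅ Mₙ(D)` with `D` a division algebra of
dimension `d²` over `E`. -/
def IsSchurIndex (E A : Type) [Field E] [Ring A] [Algebra E A] (d : ℕ) : Prop :=
  ∃ (D : Type) (_ : DivisionRing D) (_ : Algebra E D) (n : ℕ), 0 < n ∧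
    Nonempty (A ≃ₐ[E] Matrix (Fin n) (Fin n) D) ∧ d * d = Module.finrank E D

open Module

theorem finrank_dvd_finrank_of_algHom {E D A : Type*} [Field E] [DivisionRing D] [Ring A]
    [Algebra E D] [Algebra E A] (f : D →ₐ[E] A) (M : Type*) [AddCommGroup M] [Module A M]
    [Module E M] [IsScalarTower E A M] :
    finrank E D ∣ finrank E M := by
  let _ : Module D M := Module.compHom M f.toRingHom
  have : IsScalarTower E D M := ⟨fun e d x => by
    show f (e • d) • x = e • (f d • x)
    rw [map_smul, smul_assoc]⟩
  exact finrank_dvd_finrank_right E D M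

namespace Algebra.TensorProduct

variable {E D₁ D₂ : Type*} [Field E] [DivisionRing D₁] [DivisionRing D₂]
  [Algebra E D₁] [Algebra E D₂]

theorem finrank_dvd_finrank_of_coprime (hcop : (finrank E D₁).Coprime (finrank E D₂))
    (M : Type*) [AddCommGroup M] [Module (D₁ ⊗[E] D₂) M] [Module E M]
    [IsScalarTower E (D₁ ⊗[E] D₂) M] :
    finrank E (D₁ ⊗[E] D₂) ∣ finrank E M := by
  rw [finrank_tensorProduct]
  exact hcop.mul_dvd_of_dvd_of_dvd
    (finrank_dvd_finrank_of_algHom (includeLeft : D₁ →ₐ[E] D₁ ⊗[E] D₂) M)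
    (finrank_dvd_finrank_of_algHom (includeRight : D₂ →ₐ[E] D₁ ⊗[E] D₂) M)

variable [FiniteDimensional E D₁] [FiniteDimensional E D₂]

theorem isSimpleModule_self_of_coprime (hcop : (finrank E D₁).Coprime (finrank E D₂)) :
    IsSimpleModule (D₁ ⊗[E] D₂) (D₁ ⊗[E] D₂) := by
  have : Nontrivial (D₁ ⊗[E] D₂) := by
    rw [← finrank_pos_iff (R := E), finrank_tensorProduct]
    exact Nat.mul_pos finrank_pos finrank_pos
  refine { eq_bot_or_eq_top := fun I => or_iff_not_imp_left.mpr fun hI => ?_ }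
  have hpos : 0 < finrank E (I.restrictScalars E) := by
    rwa [Nat.pos_iff_ne_zero, Ne, Submodule.finrank_eq_zero, Submodule.restrictScalars_eq_bot_iff]
  have hdvd := finrank_dvd_finrank_of_coprime hcop (I.restrictScalars E)
  rw [← Submodule.restrictScalars_eq_top_iff E]
  exact Submodule.eq_top_of_finrank_eq <|
    (Submodule.finrank_le _).antisymm (Nat.le_of_dvd hpos hdvd)

noncomputable abbrev divisionRingOfCoprime (hcop : (finrank E D₁).Coprime (finrank E D₂)) :
    DivisionRing (D₁ ⊗[E] D₂) :=
  .ofIsUnitOrEqZero fun a => or_iff_not_imp_right.mpr <|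
    (isSimpleModule_self_iff_isUnit.mp (isSimpleModule_self_of_coprime hcop)).2 a

end Algebra.TensorProduct

theorem Module.Finite.of_algEquiv_matrix {R B D : Type*} [CommSemiring R] [Semiring B]
    [Algebra R B] [Module.Finite R B] [Semiring D] [Algebra R D] {n : ℕ} (hn : 0 < n)
    (e : B ≃ₐ[R] Matrix (Fin n) (Fin n) D) : Module.Finite R D :=
  .of_surjective ((Matrix.entryLinearMap R D ⟨0, hn⟩ ⟨0, hn⟩).comp e.toLinearMap) fun d =>
    ⟨e.symm (.of fun _ _ => d), by simp⟩

noncomputable def Matrix.finKroneckerTMulAlgEquiv (R A B : Type*) [CommSemiring R]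
    [Semiring A] [Semiring B] [Algebra R A] [Algebra R B] (m n : ℕ) :
    Matrix (Fin m) (Fin m) A ⊗[R] Matrix (Fin n) (Fin n) B ≃ₐ[R]
      Matrix (Fin (m * n)) (Fin (m * n)) (A ⊗[R] B) :=
  (kroneckerTMulAlgEquiv (Fin m) (Fin n) R R A B).trans (reindexAlgEquiv R _ finProdFinEquiv)

theorem schurIndex_tensor_of_coprime_general (E B₁ B₂ : Type) [Field E]
    [Ring B₁] [Algebra E B₁] [FiniteDimensional E B₁]
    [Ring B₂] [Algebra E B₂] [FiniteDimensional E B₂]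
    (d₁ d₂ : ℕ) (hd₁ : IsSchurIndex E B₁ d₁) (hd₂ : IsSchurIndex E B₂ d₂)
    (hcop : Nat.Coprime d₁ d₂) :
    IsSchurIndex E (B₁ ⊗[E] B₂) (d₁ * d₂) := by
  obtain ⟨D₁, _, _, n₁, hn₁, ⟨e₁⟩, hdim₁⟩ := hd₁
  obtain ⟨D₂, _, _, n₂, hn₂, ⟨e₂⟩, hdim₂⟩ := hd₂
  have := Module.Finite.of_algEquiv_matrix hn₁ e₁
  have := Module.Finite.of_algEquiv_matrix hn₂ e₂
  have hcop_finrank : (finrank E D₁).Coprime (finrank E D₂) := by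
    rw [← hdim₁, ← hdim₂]
    exact .mul_left (hcop.mul_right hcop) (hcop.mul_right hcop)
  refine ⟨D₁ ⊗[E] D₂, Algebra.TensorProduct.divisionRingOfCoprime hcop_finrank, inferInstance,
    n₁ * n₂, Nat.mul_pos hn₁ hn₂, ⟨?_⟩, ?_⟩
  · exact (Algebra.TensorProduct.congr e₁ e₂).trans (Matrix.finKroneckerTMulAlgEquiv E D₁ D₂ n₁ n₂)
  · rw [finrank_tensorProduct, ← hdim₁, ← hdim₂]
    ring

/-- If `B₁`, `B₂` are finite-dimensional central simple algebras over a field `E` with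
coprime Schur indices `d₁`, `d₂`, then the Schur index of `B₁ ⊗[E] B₂` is `d₁ * d₂`. -/
theorem schurIndex_tensor_of_coprime (E B₁ B₂ : Type) [Field E]
    [Ring B₁] [Algebra E B₁] [Algebra.IsCentral E B₁] [IsSimpleRing B₁] [FiniteDimensional E B₁]
    [Ring B₂] [Algebra E B₂] [Algebra.IsCentral E B₂] [IsSimpleRing B₂] [FiniteDimensional E B₂]
    (d₁ d₂ : ℕ) (hd₁ : IsSchurIndex E B₁ d₁) (hd₂ : IsSchurIndex E B₂ d₂)
    (hcop : Nat.Coprime d₁ d₂) :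
    IsSchurIndex E (B₁ ⊗[E] B₂) (d₁ * d₂) :=
  schurIndex_tensor_of_coprime_general E B₁ B₂ d₁ d₂ hd₁ hd₂ hcop
end

section
/- Let (K, v) be a complete discrete valued field of characteristic p > 0 with residue field k satisfying [k : k^p] = p^n for some integer n ≥ 0. Then [K : K^p] = p^{n+1}. -/
/-!
Fix a uniformizer `π` of `O` and lifts `u j ∈ O` of a basis of `k` over `kᵖ`; the `p ^ (n + 1)`
elements `π ^ i * u j` with `i < p` form a basis of `K` over `Kᵖ`. Being a basis over the `p`-th
powers amounts to bijectivity of the additive map `a ↦ ∑ a_{ij} ^ p * π ^ i * u j`, which scales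
by `c ^ p` when `a` is scaled by `c`. Over `O` this reduces bijectivity to a statement modulo
`π ^ p`, where the expansion in the digits `π ^ i`, `i < p`, is governed by the residue field:
injectivity follows by cancelling powers of `π` (Hausdorff property), surjectivity by successive
approximation (completeness). Over `K`, write `a / d = a * d ^ (p - 1) / d ^ p`.
-/

open IsLocalRing

section FrobeniusCombination

variable {R : Type*} [CommRing R] (p : ℕ) [ExpChar R p] {ι : Type*} [Fintype ι]

def frobeniusCombination (u : ι → R) : (ι → R) →+ R where
  toFun w := ∑ j, w j ^ p * u j
  map_zero' := by simp [zero_pow (expChar_pos R p).ne']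
  map_add' v w := by simp only [Pi.add_apply, add_pow_expChar, add_mul, Finset.sum_add_distrib]

variable {p}

@[simp]
lemma frobeniusCombination_apply (u w : ι → R) :
    frobeniusCombination p u w = ∑ j, w j ^ p * u j := rfl

lemma frobeniusCombination_smul (u : ι → R) (c : R) (w : ι → R) :
    frobeniusCombination p u (c • w) = c ^ p * frobeniusCombination p u w := by
  simp [mul_pow, Finset.mul_sum, mul_assoc]

lemma map_frobeniusCombination {S : Type*} [CommRing S] [ExpChar S p] (f : R →+* S)
    (u w : ι → R) :
    f (frobeniusCombination p u w) = frobeniusCombination p (f ∘ u) (f ∘ w) := by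
  simp

lemma frobeniusCombination_prod {κ : Type*} [Fintype κ] (v : κ → R) (u : ι → R)
    (a : κ × ι → R) :
    frobeniusCombination p (fun ij => v ij.1 * u ij.2) a =
      ∑ i, v i * frobeniusCombination p u (fun j => a (i, j)) := by
  simp only [frobeniusCombination_apply, Fintype.sum_prod_type, Finset.mul_sum]
  exact Finset.sum_congr rfl fun i _ => Finset.sum_congr rfl fun j _ => by ring

end FrobeniusCombination

section Field

variable {F : Type*} [Field F] {p : ℕ} [ExpChar F p] {ι : Type*} [Fintype ι]

lemma Module.Basis.bijective_frobeniusCombination (b : Basis ι (frobenius F p).fieldRange F) :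
    Function.Bijective (frobeniusCombination p (b ·)) := by
  constructor
  · rw [injective_iff_map_eq_zero]
    intro w hw
    have hsum : ∑ j, (⟨frobenius F p (w j), w j, rfl⟩ : (frobenius F p).fieldRange) • b j = 0 :=
      hw
    funext j
    have := Fintype.linearIndependent_iff.mp b.linearIndependent _ hsum j
    exact (frobenius_inj F p) (by simpa [Subtype.ext_iff] using this)
  · intro x
    choose w hw using fun j => (b.repr x j).2
    refine ⟨w, ?_⟩
    conv_rhs => rw [← b.sum_repr x]
    exact Finset.sum_congr rfl fun j _ => by rw [Subfield.smul_def, ← hw j, frobenius_def]; rfl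

lemma rank_fieldRange_frobenius_eq_card {u : ι → F}
    (hu : Function.Bijective (frobeniusCombination p u)) :
    Module.rank (frobenius F p).fieldRange F = Fintype.card ι := by
  have hli : LinearIndependent (frobenius F p).fieldRange u := by
    rw [Fintype.linearIndependent_iff]
    intro g hg j
    choose w hw using fun j => (g j).2
    have hw0 : w = 0 := hu.1 <| by
      rw [map_zero, ← hg]
      exact Finset.sum_congr rfl fun j _ => by rw [Subfield.smul_def, ← hw j, frobenius_def]; rfl
    ext
    simp [← hw j, hw0]
  have hsp : ⊤ ≤ Submodule.span (frobenius F p).fieldRange (Set.range u) := by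
    intro x _
    obtain ⟨w, rfl⟩ := hu.2 x
    rw [Submodule.mem_span_range_iff_exists_fun]
    exact ⟨fun j => ⟨frobenius F p (w j), w j, rfl⟩, rfl⟩
  exact rank_eq_card_basis (.mk hli hsp)

end Field

section FractionRing

variable {R K : Type*} [CommRing R] [IsDomain R] [Field K] [Algebra R K] [IsFractionRing R K]
  {p : ℕ} [ExpChar R p] [ExpChar K p] {ι : Type*} [Fintype ι]

lemma IsFractionRing.bijective_frobeniusCombination {c : ι → R}
    (hc : Function.Bijective (frobeniusCombination p c)) :
    Function.Bijective (frobeniusCombination p (algebraMap R K ∘ c)) := by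
  constructor
  · rw [injective_iff_map_eq_zero]
    intro w hw
    obtain ⟨d, hd⟩ := IsLocalization.exist_integer_multiples (nonZeroDivisors R) Finset.univ w
    choose a ha using fun j => hd j (Finset.mem_univ j)
    have ha0 : a = 0 := hc.1 <| IsFractionRing.injective R K <| by
      have hda : algebraMap R K ∘ a = algebraMap R K d • w :=
        funext fun j => by rw [Function.comp_apply, ha j, Algebra.smul_def]; rfl
      rw [map_frobeniusCombination, map_zero, map_zero, hda, frobeniusCombination_smul, hw, mul_zero]
    funext j
    have hdw : algebraMap R K (d : R) * w j = 0 := by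
      rw [← Algebra.smul_def, ← ha j, ha0, Pi.zero_apply, map_zero]
    exact (mul_eq_zero.mp hdw).resolve_left (IsFractionRing.to_map_ne_zero_of_mem_nonZeroDivisors d.2)
  · intro x
    obtain ⟨a, d, hd, rfl⟩ := IsFractionRing.div_surjective R x
    obtain ⟨w, hw⟩ := hc.2 (a * d ^ (p - 1))
    refine ⟨fun j => algebraMap R K (w j) / algebraMap R K d, ?_⟩
    have hd0 : algebraMap R K d ≠ 0 := IsFractionRing.to_map_ne_zero_of_mem_nonZeroDivisors hd
    have hp : p - 1 + 1 = p := Nat.sub_add_cancel (expChar_pos R p)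
    calc frobeniusCombination p (algebraMap R K ∘ c)
          (fun j => algebraMap R K (w j) / algebraMap R K d)
        = algebraMap R K (frobeniusCombination p c w) / algebraMap R K d ^ p := by
          simp [Finset.sum_div, div_pow, div_mul_eq_mul_div]
      _ = algebraMap R K a / algebraMap R K d := by
          rw [div_eq_div_iff (pow_ne_zero _ hd0) hd0, hw, map_mul, map_pow, mul_assoc,
            ← pow_succ, hp]

end FractionRing

section Adic

variable {O : Type*} [CommRing O] {π : O}

lemma smodEq_span_singleton_pow_iff {n : ℕ} {x y : O} :
    x ≡ y [SMOD (Ideal.span {π} ^ n • ⊤ : Submodule O O)] ↔ π ^ n ∣ x - y := by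
  rw [SModEq.sub_mem, Ideal.span_singleton_pow, smul_eq_mul, Ideal.mul_top,
    Ideal.mem_span_singleton]

lemma eq_zero_of_forall_pow_dvd [IsHausdorff (Ideal.span {π}) O] {x : O}
    (h : ∀ n, π ^ n ∣ x) : x = 0 :=
  IsHausdorff.haus ‹_› x fun n => smodEq_span_singleton_pow_iff.mpr (by simpa using h n)

lemma exists_pow_dvd_sub_sum_pow_mul {M : Type*} (T : M → O) (h : ∀ x, ∃ m, π ∣ x - T m)
    (r : ℕ) (x : O) : ∃ m : Fin r → M, π ^ r ∣ x - ∑ i : Fin r, π ^ (i : ℕ) * T (m i) := by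
  induction r generalizing x with
  | zero => exact ⟨Fin.elim0, by simp⟩
  | succ r ih =>
    obtain ⟨m₀, y, hy⟩ := h x
    obtain ⟨m, z, hz⟩ := ih y
    refine ⟨Fin.cons m₀ m, z, ?_⟩
    have hshift : ∑ i : Fin r, π ^ ((i : ℕ) + 1) * T (m i) = π * ∑ i : Fin r, π ^ (i : ℕ) * T (m i) := by
      rw [Finset.mul_sum]
      exact Finset.sum_congr rfl fun i _ => by ring
    simp only [Fin.sum_univ_succ, Fin.cons_zero, Fin.cons_succ, Fin.val_zero, Fin.val_succ,
      pow_zero, one_mul, hshift]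
    linear_combination hy + π * hz

variable {κ : Type*} {q : ℕ} {S : (κ → O) →+ O}

lemma injective_of_forall_dvd_of_map_eq_zero [IsDomain O] [IsHausdorff (Ideal.span {π}) O]
    (hπ : π ≠ 0) (hS : ∀ c v, S (c • v) = c ^ q * S v) (h : ∀ v, S v = 0 → ∀ i, π ∣ v i) :
    Function.Injective S := by
  have key : ∀ n v, S v = 0 → ∀ i, π ^ n ∣ v i := by
    intro n
    induction n with
    | zero => simp
    | succ n ih =>
      intro v hv i
      choose v' hv' using h v hv
      have hv'0 : S v' = 0 := by
        rw [show v = π • v' from funext hv', hS] at hv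
        exact (mul_eq_zero.mp hv).resolve_left (pow_ne_zero _ hπ)
      rw [hv' i, pow_succ']
      exact mul_dvd_mul_left π (ih v' hv'0 i)
  rw [injective_iff_map_eq_zero]
  exact fun v hv => funext fun i => eq_zero_of_forall_pow_dvd fun n => key n v hv i

lemma surjective_of_forall_exists_pow_dvd_sub [IsAdicComplete (Ideal.span {π}) O] (hq : 0 < q)
    (hS : ∀ c v, S (c • v) = c ^ q * S v) (h : ∀ x, ∃ v, π ^ q ∣ x - S v) :
    Function.Surjective S := by
  choose a r hr using h
  intro x
  let y : ℕ → O := fun n => r^[n] x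
  let A : ℕ → κ → O := fun N i => ∑ m ∈ Finset.range N, π ^ m * a (y m) i
  have hA : ∀ N, x - S (A N) = π ^ (q * N) * y N := by
    intro N
    induction N with
    | zero => simp [A, y, ← Pi.zero_def]
    | succ N ih =>
      have hsucc : A (N + 1) = A N + π ^ N • a (y N) := by
        funext i; simp [A, Finset.sum_range_succ]
      have hy : y (N + 1) = r (y N) := Function.iterate_succ_apply' r N x
      rw [hsucc, map_add, hS, hy, ← pow_mul, mul_comm N q]
      linear_combination ih + π ^ (q * N) * hr (y N)
  have hcauchy : ∀ i {M N : ℕ}, M ≤ N →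
      A M i ≡ A N i [SMOD (Ideal.span {π} ^ M • ⊤ : Submodule O O)] := by
    intro i M N hMN
    rw [smodEq_span_singleton_pow_iff]
    simp only [A]
    rw [← Finset.sum_range_add_sum_Ico _ hMN, sub_add_cancel_left, dvd_neg]
    exact Finset.dvd_sum fun m hm => (pow_dvd_pow π (Finset.mem_Ico.mp hm).1).mul_right _
  choose L hL using fun i => IsPrecomplete.prec inferInstance (hcauchy i)
  have hdvd : ∀ N, π ^ N ∣ x - S L := by
    intro N
    choose w hw using fun i => smodEq_span_singleton_pow_iff.mp (hL i N)
    have hx : x - S L = π ^ (q * N) * y N + (π ^ N) ^ q * S w := by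
      rw [← hA N, ← hS, ← show A N - L = π ^ N • w from funext hw, map_sub]
      ring
    rw [hx]
    exact dvd_add ((pow_dvd_pow π (Nat.le_mul_of_pos_left N hq)).mul_right _)
      ((dvd_pow_self _ hq.ne').mul_right _)
  exact ⟨L, (sub_eq_zero.mp (eq_zero_of_forall_pow_dvd hdvd)).symm⟩

end Adic

section DiscreteValuationRing

variable {O : Type*} [CommRing O] [IsDomain O] [IsDiscreteValuationRing O] {p : ℕ} [ExpChar O p]
  [ExpChar (ResidueField O) p] {ι : Type*} [Fintype ι] {π : O}

lemma residue_eq_zero_iff_dvd (hπ : Irreducible π) {x : O} : residue O x = 0 ↔ π ∣ x := by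
  rw [residue_eq_zero_iff, hπ.maximalIdeal_eq, Ideal.mem_span_singleton]

lemma dvd_of_frobeniusCombination_pow_mul_eq_zero (hπ : Irreducible π) {u : ι → O}
    (hu : Function.Injective (frobeniusCombination p (residue O ∘ u))) {a : Fin p × ι → O}
    (ha : frobeniusCombination p (fun ij => π ^ (ij.1 : ℕ) * u ij.2) a = 0) (ij : Fin p × ι) :
    π ∣ a ij := by
  set s : Fin p → O := fun i => frobeniusCombination p u (fun j => a (i, j))
  have hs : ∑ i : Fin p, π ^ (i : ℕ) * s i = 0 := (frobeniusCombination_prod _ _ _).symm.trans ha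
  have hrow_dvd : ∀ i, π ∣ s i → ∀ j, π ∣ a (i, j) := by
    intro i hi j
    have hres : residue O ∘ (fun j => a (i, j)) = 0 := by
      apply hu
      rw [map_zero, ← map_frobeniusCombination, (residue_eq_zero_iff_dvd hπ).2 hi]
    exact (residue_eq_zero_iff_dvd hπ).1 (congrFun hres j)
  have hrow_pow_dvd : ∀ i, (∀ j, π ∣ a (i, j)) → π ^ p ∣ s i := by
    intro i hi
    choose a' ha' using hi
    exact ⟨_, by simp only [s]; rw [show (fun j => a (i, j)) = π • a' from funext ha',
      frobeniusCombination_smul]⟩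
  -- By strong induction on `i`: rows below `i` contribute multiples of `π ^ p`, rows above it
  -- multiples of `π ^ (i + 1)`, so `π ^ (i + 1) ∣ π ^ i * s i`.
  suffices ∀ n (i : Fin p), (i : ℕ) = n → ∀ j, π ∣ a (i, j) from this _ ij.1 rfl ij.2
  intro n
  induction n using Nat.strong_induction_on with
  | _ n ih =>
  rintro i rfl
  apply hrow_dvd
  have hdvd : π ^ ((i : ℕ) + 1) ∣ π ^ (i : ℕ) * s i := by
    rw [← Finset.add_sum_erase _ _ (Finset.mem_univ i), add_eq_zero_iff_eq_neg] at hs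
    rw [hs, dvd_neg]
    refine Finset.dvd_sum fun i' hi' => ?_
    rcases lt_or_gt_of_ne (Finset.ne_of_mem_erase hi') with hlt | hgt
    · exact ((pow_dvd_pow π (by omega)).trans (hrow_pow_dvd i' (ih i' hlt i' rfl))).mul_left _
    · exact (pow_dvd_pow π hgt).mul_right _
  rwa [pow_succ, mul_dvd_mul_iff_left (pow_ne_zero _ hπ.ne_zero)] at hdvd

lemma exists_pow_dvd_sub_frobeniusCombination_pow_mul (hπ : Irreducible π) {u : ι → O}
    (hu : Function.Surjective (frobeniusCombination p (residue O ∘ u))) (x : O) :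
    ∃ a, π ^ p ∣ x - frobeniusCombination p (fun ij : Fin p × ι => π ^ (ij.1 : ℕ) * u ij.2) a := by
  have hmod : ∀ x : O, ∃ w, π ∣ x - frobeniusCombination p u w := by
    intro x
    obtain ⟨w, hw⟩ := hu (residue O x)
    choose w' hw' using fun j => residue_surjective (w j)
    refine ⟨w', (residue_eq_zero_iff_dvd hπ).1 ?_⟩
    rw [map_sub, map_frobeniusCombination, ← hw, show residue O ∘ w' = w from funext hw', sub_self]
  obtain ⟨m, hm⟩ := exists_pow_dvd_sub_sum_pow_mul _ hmod p x
  exact ⟨fun ij => m ij.1 ij.2, by rwa [frobeniusCombination_prod (fun i : Fin p => π ^ (i : ℕ))]⟩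

lemma bijective_frobeniusCombination_pow_mul [IsAdicComplete (maximalIdeal O) O]
    (hπ : Irreducible π) {u : ι → O}
    (hu : Function.Bijective (frobeniusCombination p (residue O ∘ u))) :
    Function.Bijective
      (frobeniusCombination p (fun ij : Fin p × ι => π ^ (ij.1 : ℕ) * u ij.2)) := by
  have : IsAdicComplete (Ideal.span {π}) O := hπ.maximalIdeal_eq ▸ inferInstance
  exact ⟨injective_of_forall_dvd_of_map_eq_zero hπ.ne_zero (frobeniusCombination_smul _)
      fun _ ha => dvd_of_frobeniusCombination_pow_mul_eq_zero hπ hu.1 ha,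
    surjective_of_forall_exists_pow_dvd_sub (expChar_pos O p) (frobeniusCombination_smul _)
      (exists_pow_dvd_sub_frobeniusCombination_pow_mul hπ hu.2)⟩

end DiscreteValuationRing

/-- Let `K` be a complete discrete valued field of characteristic `p > 0`, realized as the
fraction field of a complete discrete valuation ring `O`, with residue field `k` satisfying
`[k : kᵖ] = pⁿ`. Then `[K : Kᵖ] = p^(n+1)`. -/
theorem rank_over_pPowers_of_complete_discrete (p n : ℕ) [Fact p.Prime]
    (O : Type) [CommRing O] [IsDomain O] [IsDiscreteValuationRing O]
    [IsAdicComplete (IsLocalRing.maximalIdeal O) O]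
    (K : Type) [Field K] [Algebra O K] [IsFractionRing O K] [CharP K p]
    [CharP (IsLocalRing.ResidueField O) p]
    (h : Module.rank (↥(RingHom.fieldRange (frobenius (IsLocalRing.ResidueField O) p)))
        (IsLocalRing.ResidueField O) = (p : Cardinal) ^ n) :
    Module.rank (↥(RingHom.fieldRange (frobenius K p))) K = (p : Cardinal) ^ (n + 1) := by
  have : CharP O p := RingHom.charP (algebraMap O K) (IsFractionRing.injective O K) p
  have hfinrank : Module.finrank (frobenius (ResidueField O) p).fieldRange (ResidueField O) =
      p ^ n := Module.finrank_eq_of_rank_eq (by rw [h]; norm_cast)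
  have : Module.Finite (frobenius (ResidueField O) p).fieldRange (ResidueField O) :=
    Module.finite_of_finrank_pos (by rw [hfinrank]; exact pow_pos (Fact.out : p.Prime).pos n)
  let b := Module.finBasisOfFinrankEq _ _ hfinrank
  choose u hu using fun j => residue_surjective (b j)
  obtain ⟨π, hπ⟩ := IsDiscreteValuationRing.exists_irreducible O
  have hres : Function.Bijective (frobeniusCombination p (residue O ∘ u)) := by
    rw [show residue O ∘ u = (b ·) from funext hu]
    exact b.bijective_frobeniusCombination
  rw [rank_fieldRange_frobenius_eq_card (IsFractionRing.bijective_frobeniusCombination (K := K)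
    (bijective_frobeniusCombination_pow_mul hπ hres))]
  simp [pow_succ, mul_comm]
end

section
/- Let (K, v) be a Henselian valued field, f ∈ O_v(K)[X], and a ∈ O_v(K) with 2·v(f'(a)) < v(f(a)), where f' is the formal derivative. Then there exists c ∈ O_v(K) with f(c) = 0 and v(c − a) = v(f(a)) − v(f'(a)). -/
/-!
Extend `v` to a valuation `w` on an algebraic closure `K̄`, where `f` splits. For the root `c` of
`f` nearest to `a`, writing `f'(a)/f(a) = ∑ 1/(a - r)` over the roots gives
`w(c - a)·w(f'(a)) ≤ w(f(a)) < w(f'(a))²`, so `w(c - a) < w(f'(a))`, and the Taylor expansion at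
`a` upgrades the inequality to `w(c - a)·w(f'(a)) = w(f(a))`. Then `w(f'(c)) = w(f'(a)) ≠ 0`, so `c`
is a simple root, hence separable over `K`; and a root `c' ≠ c` with `w(c' - a) ≤ w(c - a)` would
give, by the Taylor expansion at `c`, `w(f'(c)) ≤ w(c' - c) < w(f'(c))`. By Henselianity all
extensions of `v` to `K(c)` are equivalent, so every `K`-conjugate of `c` is a root of `f` at the
same distance from `a`, i.e. equal to `c`. A separable element without other conjugates lies in `K`.
-/

/-- A valued field `(K, v)` is Henselian if `v` extends uniquely, up to equivalence, to a
valuation on every algebraic extension of `K`. -/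
def Valuation.IsHenselianValued (K : Type) [Field K] {Γ : Type}
    [LinearOrderedCommGroupWithZero Γ] (v : Valuation K Γ) : Prop :=
  ∀ (L : Type) [Field L] [Algebra K L], Algebra.IsAlgebraic K L →
    ∀ (Γ₁ Γ₂ : Type) [LinearOrderedCommGroupWithZero Γ₁] [LinearOrderedCommGroupWithZero Γ₂]
      (w₁ : Valuation L Γ₁) (w₂ : Valuation L Γ₂),
      (w₁.comap (algebraMap K L)).IsEquiv v → (w₂.comap (algebraMap K L)).IsEquiv v →
        w₁.IsEquiv w₂

open Polynomial

theorem Polynomial.eval_map_subtype {R : Type*} [CommRing R] {S : Subring R} (P : S[X]) (z : S) :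
    (P.map S.subtype).eval (z : R) = P.eval z :=
  eval_map_apply (p := P) S.subtype z

namespace Valuation

variable {L : Type*} [Field L] {Γ : Type*} [LinearOrderedCommGroupWithZero Γ]
  {w : Valuation L Γ} {F : L[X]}

theorem exists_map_integer_eq (hF : ∀ i, w (F.coeff i) ≤ 1) :
    ∃ P : w.integer[X], P.map w.integer.subtype = F :=
  (mem_lifts F).mp <| (lifts_iff_coeff_lifts F).mpr fun i => ⟨⟨_, hF i⟩, rfl⟩

theorem coeff_derivative_le_one (hF : ∀ i, w (F.coeff i) ≤ 1) (i : ℕ) :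
    w (F.derivative.coeff i) ≤ 1 := by
  obtain ⟨P, rfl⟩ := exists_map_integer_eq hF
  rw [derivative_map, coeff_map]
  exact (P.derivative.coeff i).2

theorem eval_le_one_of_coeff_le_one (hF : ∀ i, w (F.coeff i) ≤ 1) {x : L} (hx : w x ≤ 1) :
    w (F.eval x) ≤ 1 := by
  obtain ⟨P, rfl⟩ := exists_map_integer_eq hF
  lift x to w.integer using hx
  rw [eval_map_subtype]
  exact (P.eval x).2

theorem map_eval_sub_eval_le (hF : ∀ i, w (F.coeff i) ≤ 1) {x y : L} (hx : w x ≤ 1)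
    (hy : w y ≤ 1) : w (F.eval x - F.eval y) ≤ w (x - y) := by
  obtain ⟨P, rfl⟩ := exists_map_integer_eq hF
  lift x to w.integer using hx
  lift y to w.integer using hy
  obtain ⟨k, hk⟩ := sub_dvd_eval_sub x y P
  have hk' : ((P.eval x : w.integer) : L) - (P.eval y : w.integer) = (x - y) * k := by
    exact_mod_cast congrArg Subtype.val hk
  rw [eval_map_subtype, eval_map_subtype, hk', w.map_mul]
  exact mul_le_of_le_one_right' k.2

theorem exists_eval_add_eq (hF : ∀ i, w (F.coeff i) ≤ 1) {x y : L} (hx : w x ≤ 1)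
    (hy : w y ≤ 1) : ∃ k, w k ≤ 1 ∧
      F.eval (x + y) = F.eval x + F.derivative.eval x * y + k * y ^ 2 := by
  obtain ⟨P, rfl⟩ := exists_map_integer_eq hF
  lift x to w.integer using hx
  lift y to w.integer using hy
  obtain ⟨k, hk⟩ := P.binomExpansion x y
  refine ⟨k, k.2, ?_⟩
  rw [derivative_map, ← Subring.coe_add, eval_map_subtype, eval_map_subtype, eval_map_subtype,
    hk]
  push_cast
  rfl

theorem mul_map_eval_derivative_prod_le {b : L} {t : Γ} (R : Multiset L)
    (hR : ∀ r ∈ R, t ≤ w (r - b)) :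
    t * w ((R.map (X - C ·)).prod.derivative.eval b) ≤ w ((R.map (X - C ·)).prod.eval b) := by
  induction R using Multiset.induction_on with
  | empty => simp
  | cons r R ih =>
    have hr : t ≤ w (b - r) := w.map_sub_swap r b ▸ hR r (Multiset.mem_cons_self r R)
    have hR' := ih fun s hs => hR s (Multiset.mem_cons_of_mem hs)
    simp only [Multiset.map_cons, Multiset.prod_cons, derivative_mul, derivative_sub,
      derivative_X, derivative_C, sub_zero, one_mul, eval_add, eval_mul, eval_sub, eval_X,
      eval_C]
    refine (mul_le_mul_right (w.map_add _ _) t).trans ?_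
    rw [mul_max, w.map_mul, w.map_mul, mul_left_comm t]
    exact max_le (mul_le_mul_left hr _) (mul_le_mul_right hR' _)

theorem mul_map_eval_derivative_le_of_splits (hsplit : F.Splits) {b : L} {t : Γ}
    (ht : ∀ r ∈ F.roots, t ≤ w (r - b)) : t * w (F.derivative.eval b) ≤ w (F.eval b) := by
  rw [hsplit.eq_prod_roots, derivative_C_mul, eval_mul, eval_mul, eval_C, w.map_mul, w.map_mul,
    mul_left_comm]
  exact mul_le_mul_right (mul_map_eval_derivative_prod_le _ ht) _

theorem map_eval_eq_of_map_sub_lt (hF : ∀ i, w (F.coeff i) ≤ 1) {b c : L} (hb : w b ≤ 1)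
    (hc : w c ≤ 1) (hlt : w (c - b) < w (F.eval b)) : w (F.eval c) = w (F.eval b) :=
  map_eq_of_sub_lt _ ((map_eval_sub_eval_le hF hc hb).trans_lt hlt)

theorem map_sub_mul_map_eval_derivative_eq (hF : ∀ i, w (F.coeff i) ≤ 1) {b c : L}
    (hb : w b ≤ 1) (hc : F.IsRoot c) (hlt : w (c - b) < w (F.derivative.eval b)) :
    w (c - b) * w (F.derivative.eval b) = w (F.eval b) := by
  obtain rfl | hcb := eq_or_ne c b
  · simp [hc.eq_zero]
  have hd : w (F.derivative.eval b) ≤ 1 :=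
    eval_le_one_of_coeff_le_one (coeff_derivative_le_one hF) hb
  obtain ⟨k, hk, hexp⟩ := exists_eval_add_eq hF hb (hlt.le.trans hd)
  rw [add_sub_cancel, hc.eq_zero] at hexp
  have hFb : F.eval b = -(F.derivative.eval b * (c - b) + k * (c - b) ^ 2) := by
    linear_combination -hexp
  have hsmall : w (k * (c - b) ^ 2) < w (F.derivative.eval b * (c - b)) := by
    rw [w.map_mul, w.map_mul, map_pow, sq, mul_comm (w (F.derivative.eval b))]
    calc w k * (w (c - b) * w (c - b)) ≤ w (c - b) * w (c - b) := mul_le_of_le_one_left' hk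
      _ < w (c - b) * w (F.derivative.eval b) :=
        mul_lt_mul_of_pos_left hlt (w.pos_iff.mpr (sub_ne_zero.mpr hcb))
  rw [hFb, w.map_neg, w.map_add_eq_of_lt_left hsmall, w.map_mul, mul_comm]

theorem eq_of_isRoot_of_map_sub_lt (hF : ∀ i, w (F.coeff i) ≤ 1) {c c' : L} (hc1 : w c ≤ 1)
    (hc : F.IsRoot c) (hc' : F.IsRoot c') (hlt : w (c' - c) < w (F.derivative.eval c)) :
    c' = c := by
  by_contra hne
  have hd : w (F.derivative.eval c) ≤ 1 :=
    eval_le_one_of_coeff_le_one (coeff_derivative_le_one hF) hc1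
  obtain ⟨k, hk, hexp⟩ := exists_eval_add_eq hF hc1 (hlt.le.trans hd)
  rw [add_sub_cancel, hc.eq_zero, hc'.eq_zero, zero_add, sq, ← mul_assoc, ← add_mul, eq_comm,
    mul_eq_zero, or_iff_left (sub_ne_zero.mpr hne), add_eq_zero_iff_eq_neg] at hexp
  have : w (F.derivative.eval c) ≤ w (c' - c) := by
    rw [hexp, w.map_neg, w.map_mul]
    exact mul_le_of_le_one_left' hk
  exact this.not_gt hlt

theorem exists_nearest_root (hF : ∀ i, w (F.coeff i) ≤ 1) (hsplit : F.Splits) {b : L}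
    (hb : w b ≤ 1) (hquad : w (F.eval b) < w (F.derivative.eval b) ^ 2) :
    ∃ c, F.IsRoot c ∧ w c ≤ 1 ∧ w (c - b) * w (F.derivative.eval b) = w (F.eval b) ∧
      F.derivative.eval c ≠ 0 ∧ ∀ c', F.IsRoot c' → w (c' - b) ≤ w (c - b) → c' = c := by
  classical
  set d := w (F.derivative.eval b)
  have hd0 : d ≠ 0 := by
    rintro hd
    simp [hd] at hquad
  have hd1 : d ≤ 1 := eval_le_one_of_coeff_le_one (coeff_derivative_le_one hF) hb
  have hroots : F.roots.toFinset.Nonempty := by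
    refine Multiset.toFinset_nonempty.mpr (hsplit.roots_ne_zero fun hdeg => hd0 ?_)
    simp [d, derivative_of_natDegree_zero hdeg]
  obtain ⟨c, hcR, hmin⟩ := F.roots.toFinset.exists_min_image (fun r => w (r - b)) hroots
  have hF0 : F ≠ 0 := fun h => hd0 (by simp [d, h])
  have hc : F.IsRoot c := (mem_roots hF0).mp (Multiset.mem_toFinset.mp hcR)
  have hle : w (c - b) * d ≤ w (F.eval b) :=
    mul_map_eval_derivative_le_of_splits hsplit fun r hr => hmin r (Multiset.mem_toFinset.mpr hr)
  have hlt : w (c - b) < d := by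
    refine lt_of_mul_lt_mul_right (hle.trans_lt ?_) zero_le
    rwa [← sq]
  have hc1 : w c ≤ 1 := by
    rw [← sub_add_cancel c b]
    exact w.map_add_le (hlt.le.trans hd1) hb
  have hdc : w (F.derivative.eval c) = d :=
    map_eval_eq_of_map_sub_lt (coeff_derivative_le_one hF) hb hc1 hlt
  refine ⟨c, hc, hc1, map_sub_mul_map_eval_derivative_eq hF hb hc hlt,
    fun h => hd0 (by rw [← hdc, h, w.map_zero]), fun c' hc' hc'b => ?_⟩
  refine eq_of_isRoot_of_map_sub_lt hF hc1 hc hc' ?_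
  rw [hdc, ← sub_sub_sub_cancel_right c' c b]
  exact lt_of_le_of_lt (w.map_sub_le hc'b le_rfl) hlt

end Valuation

theorem isSeparable_of_aeval_derivative_ne_zero {K E : Type*} [Field K] [Field E] [Algebra K E]
    {f : K[X]} {c : E} (hf : aeval c f = 0) (hf' : aeval c (derivative f) ≠ 0) :
    IsSeparable K c := by
  have hint : IsIntegral K c := IsAlgebraic.isIntegral ⟨f, fun h => hf' (by simp [h]), hf⟩
  obtain ⟨g, rfl⟩ := minpoly.dvd K c hf
  refine (separable_iff_derivative_ne_zero (minpoly.irreducible hint)).mpr fun h0 => hf' ?_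
  rw [derivative_mul, h0, zero_mul, zero_add, map_mul, minpoly.aeval, zero_mul]

theorem IsSeparable.mem_range_of_isConjRoot_eq {K L : Type*} [Field K] [Field L] [Algebra K L]
    {x : L} (h : IsSeparable K x) (sp : ((minpoly K x).map (algebraMap K L)).Splits)
    (hconj : ∀ y, IsConjRoot K x y → y = x) : x ∈ Set.range (algebraMap K L) := by
  rw [← Algebra.mem_bot]
  by_contra hx
  obtain ⟨y, hne, hy⟩ := (notMem_iff_exists_ne_and_isConjRoot h sp).mp hx
  exact hne (hconj y hy).symm

theorem ValuationSubring.exists_comap_eq {K L : Type*} [Field K] [Field L] (ι : K →+* L)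
    (O : ValuationSubring K) : ∃ A : ValuationSubring L, A.comap ι = O := by
  obtain ⟨A, hA, hloc⟩ := IsLocalRing.exists_factor_valuationRing (ι.comp O.subtype)
  refine ⟨A, le_antisymm (fun x hx => ?_) fun x hx => hA ⟨x, hx⟩⟩
  by_contra hxO
  have hx0 : x ≠ 0 := by
    rintro rfl
    exact hxO O.zero_mem
  have hinv : x⁻¹ ∈ O.nonunits := O.inv_mem_nonunits_iff.mpr (Or.inr hxO)
  set y : O := ⟨x⁻¹, O.nonunits_subset hinv⟩
  have hy : ¬IsUnit y := O.coe_mem_nonunits_iff.mp hinv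
  refine hy (hloc.map_nonunit y (IsUnit.of_mul_eq_one ⟨ι x, hx⟩ (Subtype.ext ?_)))
  change ι x⁻¹ * ι x = 1
  rw [← map_mul, inv_mul_cancel₀ hx0, map_one]

theorem Valuation.exists_isEquiv_comap {K L : Type*} [Field K] [Field L] {Γ : Type*}
    [LinearOrderedCommGroupWithZero Γ] (v : Valuation K Γ) (ι : K →+* L) :
    ∃ A : ValuationSubring L, (A.valuation.comap ι).IsEquiv v := by
  obtain ⟨A, hA⟩ := v.valuationSubring.exists_comap_eq ι
  refine ⟨A, (isEquiv_iff_valuationSubring _ _).mpr ?_⟩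
  rw [← hA]
  ext x
  simp [mem_valuationSubring_iff, ValuationSubring.valuation_le_one_iff]

namespace Valuation.IsHenselianValued

variable {K : Type} [Field K] {Γ : Type} [LinearOrderedCommGroupWithZero Γ]
  {v : Valuation K Γ} {E : Type} [Field E] [Algebra K E] {Γ' : Type}
  [LinearOrderedCommGroupWithZero Γ'] {w : Valuation E Γ'}

theorem isEquiv_comap_algHom (hv : v.IsHenselianValued K)
    (hw : (w.comap (algebraMap K E)).IsEquiv v) {L : Type} [Field L] [Algebra K L]
    [Algebra.IsAlgebraic K L] (σ τ : L →ₐ[K] E) :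
    (w.comap (σ : L →+* E)).IsEquiv (w.comap (τ : L →+* E)) := by
  refine hv L ‹_› Γ' Γ' _ _ ?_ ?_ <;> rwa [← comap_comp, AlgHom.comp_algebraMap]

theorem map_aeval_eq_of_isConjRoot (hv : v.IsHenselianValued K)
    (hw : (w.comap (algebraMap K E)).IsEquiv v) {x x' : E} (hx : IsIntegral K x)
    (hx' : IsConjRoot K x x') {p q : K[X]} (h : w (aeval x p) = w (aeval x q)) :
    w (aeval x' p) = w (aeval x' q) := by
  set g := minpoly K x
  have := Fact.mk (minpoly.irreducible hx)
  have : Module.Finite K (AdjoinRoot g) :=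
    (AdjoinRoot.powerBasis (minpoly.ne_zero hx)).finite
  let σ (y : E) (hy : aeval y g = 0) : AdjoinRoot g →ₐ[K] E :=
    AdjoinRoot.liftAlgHom g (Algebra.ofId K E) y hy
  have hσ (y : E) (hy : aeval y g = 0) (p : K[X]) :
      aeval y p = σ y hy (aeval (AdjoinRoot.root g) p) := by
    rw [← aeval_algHom_apply, show σ y hy (AdjoinRoot.root g) = y from
      AdjoinRoot.liftAlgHom_root ..]
  have key := (isEquiv_comap_algHom hv hw (σ x (minpoly.aeval K x))
    (σ x' hx'.aeval_eq_zero)).eq_iff (r := aeval (AdjoinRoot.root g) p)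
    (s := aeval (AdjoinRoot.root g) q)
  simp only [comap_apply, RingHom.coe_coe, ← hσ] at key
  exact key.mp h

theorem map_sub_mul_eq_of_isConjRoot (hv : v.IsHenselianValued K)
    (hw : (w.comap (algebraMap K E)).IsEquiv v) {x y : E} (hx : IsIntegral K x)
    (hy : IsConjRoot K x y) {a d e : K}
    (h : w (x - algebraMap K E a) * w (algebraMap K E d) = w (algebraMap K E e)) :
    w (y - algebraMap K E a) * w (algebraMap K E d) = w (algebraMap K E e) := by
  have key := map_aeval_eq_of_isConjRoot hv hw hx hy (p := (X - C a) * C d) (q := C e)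
  simp only [map_mul, _root_.map_sub, aeval_X, aeval_C] at key
  exact key h

end Valuation.IsHenselianValued

/-- In multiplicative notation the hypothesis `2·v(f'(a)) < v(f(a))` reads
`v(f(a)) < v(f'(a))²` and the conclusion `v(c - a) = v(f(a)) - v(f'(a))` reads
`v(c - a) · v(f'(a)) = v(f(a))`. -/
theorem henselian_newton_root (K : Type) [Field K] (Γ : Type)
    [LinearOrderedCommGroupWithZero Γ] (v : Valuation K Γ) (hv : v.IsHenselianValued K)
    (f : Polynomial K) (hf : ∀ i : ℕ, v (f.coeff i) ≤ 1)
    (a : K) (ha : v a ≤ 1)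
    (hquad : v (f.eval a) < (v (f.derivative.eval a)) ^ 2) :
    ∃ c : K, v c ≤ 1 ∧ f.eval c = 0 ∧
      v (c - a) * v (f.derivative.eval a) = v (f.eval a) := by
  set ι := algebraMap K (AlgebraicClosure K)
  obtain ⟨A, hw⟩ := v.exists_isEquiv_comap ι
  set w := A.valuation
  have hle (x : K) : w (ι x) ≤ 1 ↔ v x ≤ 1 := hw.le_one_iff_le_one
  have hlt (x y : K) : w (ι x) < w (ι y) ↔ v x < v y := hw.lt_iff_lt
  have heq (x y : K) : w (ι x) = w (ι y) ↔ v x = v y := hw.eq_iff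
  have heval (p : K[X]) (x : K) : (p.map ι).eval (ι x) = ι (p.eval x) := eval_map_apply ..
  have hquadw : w ((f.map ι).eval (ι a)) < w ((f.map ι).derivative.eval (ι a)) ^ 2 := by
    rwa [derivative_map, heval, heval, ← map_pow, ← map_pow, hlt, map_pow]
  have hd0 : w ((f.map ι).derivative.eval (ι a)) ≠ 0 :=
    (pow_ne_zero_iff two_ne_zero).mp (zero_le.trans_lt hquadw).ne'
  obtain ⟨c, hc, hc1, hcval, hc', hnearest⟩ := w.exists_nearest_root (F := f.map ι) (b := ι a)
    (fun i => by simpa using (hle _).mpr (hf i)) (IsAlgClosed.splits _) ((hle a).mpr ha) hquadw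
  rw [IsRoot, eval_map, ← aeval_def] at hc
  rw [derivative_map, eval_map, ← aeval_def] at hc'
  rw [derivative_map, heval, heval] at hcval
  rw [derivative_map, heval] at hd0
  have hsep : IsSeparable K c := isSeparable_of_aeval_derivative_ne_zero hc hc'
  have hconj (y : AlgebraicClosure K) (hy : IsConjRoot K c y) : y = c := by
    refine hnearest y ?_ (le_of_eq (mul_right_cancel₀ hd0 ?_))
    · rw [IsRoot, eval_map, ← aeval_def]
      exact aeval_eq_zero_of_dvd_aeval_eq_zero (minpoly.dvd K c hc) hy.aeval_eq_zero
    · rw [hcval]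
      exact hv.map_sub_mul_eq_of_isConjRoot hw hsep.isIntegral hy hcval
  obtain ⟨c₀, rfl⟩ := hsep.mem_range_of_isConjRoot_eq (IsAlgClosed.splits _) hconj
  refine ⟨c₀, (hle c₀).mp hc1, ι.injective ?_, ?_⟩
  · rw [map_zero, ← hc, aeval_algebraMap_apply, coe_aeval_eq_eval]
  · rwa [← map_sub, ← w.map_mul, ← map_mul, heq, v.map_mul] at hcval
end
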